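/- Let (X,·,+) be a linear cycle set, A an abelian group, and f,g : X × X → A two maps. Then the set X × A with operations (x,a)+(y,b) = (x+y, a+b+g(x,y)) and (x,a)·(y,b) = (x·y, b+f(x,y)) is a linear cycle set if and only if (f,g) is a 2-cocycle. -/

import Mathlib

/-- A (left) linear cycle set on an abelian group `X`. -/
structure LCS (X : Type*) [AddCommGroup X] where
  dot : X → X → X
  bij : ∀ x, Function.Bijective (dot x)
  cyc : ∀ x y z, dot (dot x y) (dot x z) = dot (dot y x) (dot y z)
  dot_add : ∀ x y z, dot x (y + z) = dot x y + dot x z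
  add_dot : ∀ x y z, dot (x + y) z = dot (dot x y) (dot x z)

/-- 2-cocycle conditions for a linear cycle set with coefficients in `A`. -/
def IsCocycle {X A : Type*} [AddCommGroup X] [AddCommGroup A] (L : LCS X)
    (f g : X → X → A) : Prop :=
  (∀ x y, g x y = g y x) ∧
  (∀ x y z, g x y + g (x + y) z = g y z + g x (y + z)) ∧
  (∀ x y z, f (x + y) z = f (L.dot x y) (L.dot x z) + f x z) ∧
  (∀ x y z, f x (y + z) - f x y - f x z = g (L.dot x y) (L.dot x z) - g y z)

/-- Normalised 2-cocycles, as an additive subgroup of pairs of maps. -/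
def Zn {X : Type*} [AddCommGroup X] (L : LCS X) (A : Type*) [AddCommGroup A] :
    AddSubgroup ((X → X → A) × (X → X → A)) where
  carrier := {p | IsCocycle L p.1 p.2 ∧ p.2 0 0 = 0}
  zero_mem' := by
    refine ⟨⟨?_, ?_, ?_, ?_⟩, ?_⟩ <;> intros <;> simp
  add_mem' := by
    rintro p q ⟨⟨hp1, hp2, hp3, hp4⟩, hp5⟩ ⟨⟨hq1, hq2, hq3, hq4⟩, hq5⟩
    refine ⟨⟨?_, ?_, ?_, ?_⟩, ?_⟩ <;> intros <;>
      simp only [Prod.fst_add, Prod.snd_add, Pi.add_apply]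
    · rw [hp1, hq1]
    · rw [show ∀ a b c d : A, a + b + (c + d) = (a + c) + (b + d) by intros; abel,
        hp2, hq2]; abel
    · rw [hp3, hq3]; abel
    · rw [show ∀ a b c d e h : A, a + b - (c + d) - (e + h) = (a - c - e) + (b - d - h)
        by intros; abel, hp4, hq4]; abel
    · rw [hp5, hq5]; simp
  neg_mem' := by
    rintro p ⟨⟨hp1, hp2, hp3, hp4⟩, hp5⟩
    refine ⟨⟨?_, ?_, ?_, ?_⟩, ?_⟩ <;> intros <;>
      simp only [Prod.fst_neg, Prod.snd_neg, Pi.neg_apply]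
    · rw [hp1]
    · rw [show ∀ a b : A, -a + -b = -(a + b) by intros; abel, hp2]; abel
    · rw [hp3]; abel
    · rw [show ∀ a b c : A, -a - -b - -c = -(a - b - c) by intros; abel, hp4]; abel
    · rw [hp5]; simp

/-- Normalised 2-coboundaries. -/
def Bn {X : Type*} [AddCommGroup X] (L : LCS X) (A : Type*) [AddCommGroup A] :
    AddSubgroup ((X → X → A) × (X → X → A)) where
  carrier := {p | ∃ l : X → A, l 0 = 0 ∧ (∀ x y, p.1 x y = l (L.dot x y) - l y) ∧
      (∀ x y, p.2 x y = l (x + y) - l x - l y)}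
  zero_mem' := ⟨0, by simp⟩
  add_mem' := by
    rintro p q ⟨l, hl0, hl1, hl2⟩ ⟨m, hm0, hm1, hm2⟩
    refine ⟨l + m, by simp [hl0, hm0], fun x y => ?_, fun x y => ?_⟩ <;>
      simp only [Prod.fst_add, Prod.snd_add, Pi.add_apply, hl1, hm1, hl2, hm2] <;> abel
  neg_mem' := by
    rintro p ⟨l, hl0, hl1, hl2⟩
    refine ⟨-l, by simp [hl0], fun x y => ?_, fun x y => ?_⟩ <;>
      simp only [Prod.fst_neg, Prod.snd_neg, Pi.neg_apply, hl1, hl2] <;> abel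

/-- The second normalised linear cycle set cohomology group. -/
abbrev H2N {X : Type*} [AddCommGroup X] (L : LCS X) (A : Type*) [AddCommGroup A] :=
  Zn L A ⧸ (Bn L A).addSubgroupOf (Zn L A)

/-- Symmetric group 2-cocycles of the abelian group `X` with trivial coefficients `A`. -/
def Zsym (X : Type*) [AddCommGroup X] (A : Type*) [AddCommGroup A] :
    AddSubgroup (X → X → A) where
  carrier := {g | (∀ x y, g x y = g y x) ∧
      ∀ x y z, g x y + g (x + y) z = g y z + g x (y + z)}
  zero_mem' := by refine ⟨?_, ?_⟩ <;> intros <;> simp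
  add_mem' := by
    rintro p q ⟨hp1, hp2⟩ ⟨hq1, hq2⟩
    refine ⟨?_, ?_⟩ <;> intros <;> simp only [Pi.add_apply]
    · rw [hp1, hq1]
    · rw [show ∀ a b c d : A, a + b + (c + d) = (a + c) + (b + d) by intros; abel,
        hp2, hq2]; abel
  neg_mem' := by
    rintro p ⟨hp1, hp2⟩
    refine ⟨?_, ?_⟩ <;> intros <;> simp only [Pi.neg_apply]
    · rw [hp1]
    · rw [show ∀ a b : A, -a + -b = -(a + b) by intros; abel, hp2]; abel

/-- Symmetric group 2-coboundaries. -/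
def Bsym (X : Type*) [AddCommGroup X] (A : Type*) [AddCommGroup A] :
    AddSubgroup (X → X → A) where
  carrier := {g | ∃ l : X → A, ∀ x y, g x y = l (x + y) - l x - l y}
  zero_mem' := ⟨0, by simp⟩
  add_mem' := by
    rintro p q ⟨l, hl⟩ ⟨m, hm⟩
    exact ⟨l + m, fun x y => by simp only [Pi.add_apply, hl, hm]; abel⟩
  neg_mem' := by
    rintro p ⟨l, hl⟩
    exact ⟨-l, fun x y => by simp only [Pi.neg_apply, hl]; abel⟩

/-- The second symmetric cohomology group of an abelian group. -/
abbrev H2sym (X : Type*) [AddCommGroup X] (A : Type*) [AddCommGroup A] :=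
  Zsym X A ⧸ (Bsym X A).addSubgroupOf (Zsym X A)

/-- The (multiplicative) group structure on `AddAut A` that Mathlib provided in 2024. -/
instance AddAut.group (A : Type*) [Add A] : Group (AddAut A) where
  mul g h := AddEquiv.trans h g
  one := AddEquiv.refl _
  inv := AddEquiv.symm
  mul_assoc _ _ _ := rfl
  one_mul _ := rfl
  mul_one _ := rfl
  inv_mul_cancel := AddEquiv.self_trans_symm

@[simp]
theorem addAut_mul_apply {A : Type*} [Add A] (e₁ e₂ : AddAut A) (m : A) :
    (e₁ * e₂) m = e₁ (e₂ m) :=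
  rfl

@[simp]
theorem addAut_one_apply {A : Type*} [Add A] (m : A) : (1 : AddAut A) m = m :=
  rfl

@[simp]
theorem addAut_inv_apply {A : Type*} [Add A] (e : AddAut A) (m : A) : e⁻¹ m = e.symm m :=
  rfl

theorem perm_apply_inv_self {α : Type*} (f : Equiv.Perm α) (x : α) : f (f⁻¹ x) = x :=
  f.apply_symm_apply x

/-- Linear cycle set automorphisms, as a subgroup of the additive automorphisms. -/
def LCSAut {X : Type*} [AddCommGroup X] (L : LCS X) : Subgroup (AddAut X) where
  carrier := {φ | ∀ x y, φ (L.dot x y) = L.dot (φ x) (φ y)}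
  one_mem' := by intro x y; rfl
  mul_mem' := by
    intro a b ha hb x y
    simp only [addAut_mul_apply]
    rw [hb x y, ha]
  inv_mem' := by
    intro a ha x y
    apply a.injective
    rw [ha]
    simp

/-- The transported pair of maps under a pair of automorphisms. -/
def transport {X A : Type*} [AddCommGroup X] [AddCommGroup A]
    (φ : AddAut X) (θ : AddAut A) (p : (X → X → A) × (X → X → A)) :
    (X → X → A) × (X → X → A) :=
  (fun x y => θ (p.1 (φ⁻¹ x) (φ⁻¹ y)), fun x y => θ (p.2 (φ⁻¹ x) (φ⁻¹ y)))

/-- Addition on the extension `X ⊕_{f,g} A`. -/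
def addE {X A : Type*} [AddCommGroup X] [AddCommGroup A] (g : X → X → A)
    (p q : X × A) : X × A :=
  (p.1 + q.1, p.2 + q.2 + g p.1 q.1)

/-- Cycle set operation on the extension `X ⊕_{f,g} A`. -/
def dotE {X A : Type*} [AddCommGroup X] [AddCommGroup A] (L : LCS X) (f : X → X → A)
    (p q : X × A) : X × A :=
  (L.dot p.1 q.1, q.2 + f p.1 q.1)

/-- Normalised 1-cocycles. -/
def Z1 {X : Type*} [AddCommGroup X] (L : LCS X) (A : Type*) [AddCommGroup A] :
    AddSubgroup (X → A) where
  carrier := {l | (∀ x y, l (x + y) = l x + l y) ∧ ∀ x y, l (L.dot x y) = l y}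
  zero_mem' := by refine ⟨?_, ?_⟩ <;> intros <;> simp
  add_mem' := by
    rintro p q ⟨hp1, hp2⟩ ⟨hq1, hq2⟩
    refine ⟨?_, ?_⟩ <;> intros <;> simp only [Pi.add_apply, hp1, hq1, hp2, hq2] <;> abel
  neg_mem' := by
    rintro p ⟨hp1, hp2⟩
    refine ⟨?_, ?_⟩ <;> intros <;> simp only [Pi.neg_apply, hp1, hp2] <;> abel

/-- The subgroup `Aut_A(E)` of the permutation group of `E = X ⊕_{f,g} A`. -/
def AutAE {X A : Type*} [AddCommGroup X] [AddCommGroup A] (L : LCS X)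
    (f g : X → X → A) : Subgroup (Equiv.Perm (X × A)) where
  carrier := {ψ | (∀ p q, ψ (addE g p q) = addE g (ψ p) (ψ q)) ∧
      (∀ p q, ψ (dotE L f p q) = dotE L f (ψ p) (ψ q)) ∧
      ∃ φ ∈ LCSAut L, ∃ θ : AddAut A, ∃ l : X → A, ∀ x a, ψ (x, a) = (φ x, l x + θ a)}
  one_mem' := by
    refine ⟨fun p q => rfl, fun p q => rfl, 1, one_mem _, 1, 0, fun x a => by simp⟩
  mul_mem' := by
    rintro a b ⟨ha1, ha2, φa, hφa, θa, la, ha3⟩ ⟨hb1, hb2, φb, hφb, θb, lb, hb3⟩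
    refine ⟨fun p q => ?_, fun p q => ?_, φa * φb, mul_mem hφa hφb, θa * θb,
      fun x => la (φb x) + θa (lb x), fun x a => ?_⟩
    · simp only [Equiv.Perm.mul_apply, hb1, ha1]
    · simp only [Equiv.Perm.mul_apply, hb2, ha2]
    · simp only [Equiv.Perm.mul_apply, hb3, ha3, addAut_mul_apply, map_add]
      abel_nf
  inv_mem' := by
    rintro ψ ⟨h1, h2, φ, hφ, θ, l, h3⟩
    refine ⟨fun p q => ?_, fun p q => ?_, φ⁻¹, inv_mem hφ, θ⁻¹,
      fun x => -θ⁻¹ (l (φ⁻¹ x)), fun x a => ?_⟩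
    · apply ψ.injective
      simp only [perm_apply_inv_self, h1, perm_apply_inv_self]
    · apply ψ.injective
      simp only [perm_apply_inv_self, h2, perm_apply_inv_self]
    · apply ψ.injective
      rw [perm_apply_inv_self, h3]
      simp

/-- A predicate packaging the linear cycle set axioms for a pair of binary operations. -/
structure IsLCSOps {Y : Type*} (add : Y → Y → Y) (dot : Y → Y → Y) : Prop where
  add_assoc : ∀ a b c, add (add a b) c = add a (add b c)
  add_comm : ∀ a b, add a b = add b a
  zero_exists : ∃ e, (∀ a, add e a = a) ∧ ∀ a, ∃ b, add a b = e
  bij : ∀ a, Function.Bijective (dot a)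
  cyc : ∀ a b c, dot (dot a b) (dot a c) = dot (dot b a) (dot b c)
  dot_add : ∀ a b c, dot a (add b c) = add (dot a b) (dot a c)
  add_dot : ∀ a b c, dot (add a b) c = dot (dot a b) (dot a c)

/-- The trivial linear cycle set on an abelian group. -/
def trivLCS (X : Type*) [AddCommGroup X] : LCS X where
  dot := fun _ y => y
  bij := fun _ => Function.bijective_id
  cyc := fun _ _ _ => rfl
  dot_add := fun _ _ _ => rfl
  add_dot := fun _ _ _ => rfl

/-! Both operations of `X × A` act on first components as the operations of `X`, so each
linear cycle set axiom of `X × A` holds on first components and its second component is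
exactly one cocycle identity; evaluating at elements `(x, 0)` gives the converse. The
remaining axioms come for free: left translations are shear maps, `(0, -g 0 0)` is a zero,
and the cycle condition follows from `(a + b) · c = (a · b) · (a · c)` and commutativity. -/

theorem cyc_of_add_comm_of_add_dot {Y : Type*} {add dot : Y → Y → Y}
    (add_comm : ∀ a b, add a b = add b a)
    (add_dot : ∀ a b c, dot (add a b) c = dot (dot a b) (dot a c)) (a b c : Y) :
    dot (dot a b) (dot a c) = dot (dot b a) (dot b c) := by
  rw [← add_dot, add_comm, add_dot]

section Extension

variable {X A : Type*} [AddCommGroup X] [AddCommGroup A]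

theorem addE_comm_iff {g : X → X → A} :
    (∀ p q, addE g p q = addE g q p) ↔ ∀ x y, g x y = g y x := by
  constructor
  · intro h x y
    simpa [addE] using congrArg Prod.snd (h (x, 0) (y, 0))
  · intro hg p q
    simp only [addE, add_comm p.1, add_comm p.2, hg p.1]

theorem addE_assoc_iff {g : X → X → A} :
    (∀ p q r, addE g (addE g p q) r = addE g p (addE g q r)) ↔
      ∀ x y z, g x y + g (x + y) z = g y z + g x (y + z) := by
  constructor
  · intro h x y z
    simpa [addE] using congrArg Prod.snd (h (x, 0) (y, 0) (z, 0))
  · intro hg p q r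
    simp only [addE, add_assoc, Prod.mk.injEq, true_and]
    linear_combination (norm := abel) hg p.1 q.1 r.1

theorem dotE_add_dot_iff {L : LCS X} {f : X → X → A} (g : X → X → A) :
    (∀ p q r, dotE L f (addE g p q) r = dotE L f (dotE L f p q) (dotE L f p r)) ↔
      ∀ x y z, f (x + y) z = f (L.dot x y) (L.dot x z) + f x z := by
  constructor
  · intro h x y z
    have := congrArg Prod.snd (h (x, 0) (y, 0) (z, 0))
    simp only [addE, dotE, zero_add] at this
    rw [this, add_comm]
  · intro hf p q r
    simp only [addE, dotE, L.add_dot, hf, Prod.mk.injEq, true_and]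
    abel

theorem dotE_dot_add_iff {L : LCS X} {f g : X → X → A} :
    (∀ p q r, dotE L f p (addE g q r) = addE g (dotE L f p q) (dotE L f p r)) ↔
      ∀ x y z, f x (y + z) - f x y - f x z = g (L.dot x y) (L.dot x z) - g y z := by
  constructor
  · intro h x y z
    have := congrArg Prod.snd (h (x, 0) (y, 0) (z, 0))
    simp only [addE, dotE, zero_add] at this
    linear_combination (norm := abel) this
  · intro hf p q r
    simp only [addE, dotE, L.dot_add, Prod.mk.injEq, true_and]
    linear_combination (norm := abel) hf p.1 q.1 r.1

theorem dotE_bijective (L : LCS X) (f : X → X → A) (p : X × A) :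
    Function.Bijective (dotE L f p) :=
  (Equiv.prodShear (Equiv.ofBijective _ (L.bij p.1)) fun x => Equiv.addRight (f p.1 x)).bijective

theorem apply_zero_left_of_assoc {g : X → X → A}
    (hg : ∀ x y z, g x y + g (x + y) z = g y z + g x (y + z)) (z : X) : g 0 z = g 0 0 := by
  simpa using (hg 0 0 z).symm

theorem addE_zero_exists {g : X → X → A}
    (hg : ∀ x y z, g x y + g (x + y) z = g y z + g x (y + z)) :
    ∃ e, (∀ p, addE g e p = p) ∧ ∀ p, ∃ q, addE g p q = e := by
  refine ⟨(0, -g 0 0), fun p => ?_, fun p => ⟨(-p.1, -g 0 0 - p.2 - g p.1 (-p.1)), ?_⟩⟩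
  · simp only [addE, zero_add, apply_zero_left_of_assoc hg p.1, neg_add_cancel_comm]
  · simp only [addE, add_neg_cancel, Prod.mk.injEq, true_and]
    abel

end Extension

theorem extension_lcs_iff_cocycle {X A : Type*} [AddCommGroup X] [AddCommGroup A]
    (L : LCS X) (f g : X → X → A) :
    IsLCSOps (addE g) (dotE L f) ↔ IsCocycle L f g := by
  constructor
  · intro h
    exact ⟨addE_comm_iff.1 h.add_comm, addE_assoc_iff.1 h.add_assoc,
      (dotE_add_dot_iff g).1 h.add_dot, dotE_dot_add_iff.1 h.dot_add⟩
  · rintro ⟨hcomm, hassoc, hadd_dot, hdot_add⟩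
    have add_comm := addE_comm_iff.2 hcomm
    have add_dot := (dotE_add_dot_iff g).2 hadd_dot
    exact
      { add_assoc := addE_assoc_iff.2 hassoc
        add_comm := add_comm
        zero_exists := addE_zero_exists hassoc
        bij := dotE_bijective L f
        cyc := cyc_of_add_comm_of_add_dot add_comm add_dot
        dot_add := dotE_dot_add_iff.2 hdot_add
        add_dot := add_dot }
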